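/- The integral of the K-Bessel function $\int_0^\infty K_{iR}(y) y^{s} \frac{dy}{y}$ equals $2^{s-2}\Gamma\left(\frac{s+iR}{2}\right)\Gamma\left(\frac{s-iR}{2}\right)$ for $\Re(s) > |\Im(R)|$ (in particular for real $R$ and $\Re(s)>0$). -/

import Mathlib

/-!
Insert the integral representation of `K_ν` and swap the two integrals; this is legitimate
because `‖cosh (ν t)‖ ≤ e^{|Re ν| t}` while the `y`-integral of the modulus is
`Γ(Re s) cosh(t)^{-Re s} ≍ e^{-(Re s) t}`. The inner integral is a Gamma integral,
`∫_0^∞ e^{-y cosh t} y^{s-1} dy = Γ(s) cosh(t)^{-s}`, which leaves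
`Γ(s) ∫_0^∞ cosh(t)^{-s} cosh(νt) dt = Γ(s)/2 · ∫_ℝ cosh(t)^{-s} e^{νt} dt`.
The logistic substitution `x = σ(2t) = e^t / (2 cosh t)`, with `1 - x = e^{-t} / (2 cosh t)` and
`dx = 2 x (1 - x) dt`, turns the last integral into `2^{s-1} B((s+ν)/2, (s-ν)/2)`, and
`Γ(a) Γ(b) = Γ(a+b) B(a,b)` finishes the computation.
-/

open MeasureTheory Set Complex

/-- The modified Bessel function of the second kind, defined by its
standard integral representation `K_ν(y) = ∫_0^∞ e^{-y cosh t} cosh(ν t) dt`. -/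
noncomputable def besselK (ν : ℂ) (y : ℝ) : ℂ :=
  ∫ t in Set.Ioi (0 : ℝ), Complex.exp (-(y : ℂ) * Real.cosh t) * Complex.cosh (ν * t)

lemma Complex.ofReal_cpow_eq_exp {x : ℝ} (hx : 0 < x) (a : ℂ) :
    (x : ℂ) ^ a = exp (Real.log x * a) := by
  rw [cpow_def_of_ne_zero (ofReal_ne_zero.mpr hx.ne'), ofReal_log hx.le]

lemma Complex.ofReal_cpow_sub_one_mul {x : ℝ} (hx : 0 < x) (a : ℂ) :
    (x : ℂ) ^ (a - 1) * x = (x : ℂ) ^ a := by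
  rw [cpow_sub _ _ (ofReal_ne_zero.mpr hx.ne'), cpow_one,
    div_mul_cancel₀ _ (ofReal_ne_zero.mpr hx.ne')]

lemma betaIntegral_eq_integral_sigmoid (a b : ℂ) :
    betaIntegral a b = ∫ u : ℝ, (Real.sigmoid u : ℂ) ^ a * (Real.sigmoid (-u) : ℂ) ^ b := by
  rw [betaIntegral, intervalIntegral.integral_of_le zero_le_one, integral_Ioc_eq_integral_Ioo,
    ← Real.range_sigmoid, ← image_univ,
    integral_image_eq_integral_abs_deriv_smul MeasurableSet.univ
      (fun u _ => (Real.hasDerivAt_sigmoid u).hasDerivWithinAt) Real.sigmoid_injective.injOn,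
    Measure.restrict_univ]
  refine integral_congr_ae (.of_forall fun u => ?_)
  -- the Jacobian `σ u * σ (-u)` absorbs the `- 1` in both exponents
  have hσ := Real.sigmoid_pos u
  have hσ' := Real.sigmoid_pos (-u)
  have h1 : (1 : ℂ) - Real.sigmoid u = Real.sigmoid (-u) := by simp [Real.sigmoid_neg]
  dsimp only
  rw [← Real.sigmoid_neg, abs_of_pos (mul_pos hσ hσ'), real_smul, h1, ofReal_mul,
    ← ofReal_cpow_sub_one_mul hσ a, ← ofReal_cpow_sub_one_mul hσ' b]
  ring

lemma Real.sigmoid_two_mul (t : ℝ) : sigmoid (2 * t) = exp t / (2 * cosh t) := by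
  rw [sigmoid_def, cosh_eq, exp_neg, exp_neg, two_mul, exp_add]
  field_simp

lemma sigmoid_two_mul_cpow_mul_cpow (a b : ℂ) (t : ℝ) :
    (Real.sigmoid (2 * t) : ℂ) ^ a * (Real.sigmoid (-(2 * t)) : ℂ) ^ b
      = (2 * Real.cosh t : ℝ) ^ (-(a + b)) * exp ((a - b) * t) := by
  have hc : 0 < 2 * Real.cosh t := by positivity
  rw [← mul_neg, Real.sigmoid_two_mul, Real.sigmoid_two_mul, Real.cosh_neg,
    ofReal_cpow_eq_exp (by positivity), ofReal_cpow_eq_exp (by positivity), ofReal_cpow_eq_exp hc,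
    Real.log_div (Real.exp_pos _).ne' hc.ne', Real.log_div (Real.exp_pos _).ne' hc.ne',
    Real.log_exp, Real.log_exp, ← exp_add, ← exp_add]
  push_cast
  ring_nf

lemma integral_cosh_cpow_neg_mul_exp (s ν : ℂ) :
    ∫ t : ℝ, (Real.cosh t : ℂ) ^ (-s) * exp (ν * t)
      = 2 ^ (s - 1) * betaIntegral ((s + ν) / 2) ((s - ν) / 2) := by
  set f : ℝ → ℂ := fun u =>
    (Real.sigmoid u : ℂ) ^ ((s + ν) / 2) * (Real.sigmoid (-u) : ℂ) ^ ((s - ν) / 2)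
  have hf : ∀ t : ℝ, (Real.cosh t : ℂ) ^ (-s) * exp (ν * t) = 2 ^ s * f (2 * t) := by
    intro t
    simp only [f]
    rw [sigmoid_two_mul_cpow_mul_cpow, show (s + ν) / 2 + (s - ν) / 2 = s by ring,
      show (s + ν) / 2 - (s - ν) / 2 = ν by ring, ofReal_mul,
      mul_cpow_ofReal_nonneg zero_le_two (Real.cosh_pos t).le, ofReal_ofNat, cpow_neg 2]
    field_simp
  calc ∫ t : ℝ, (Real.cosh t : ℂ) ^ (-s) * exp (ν * t) = 2 ^ s * ∫ t : ℝ, f (2 * t) := by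
        simp_rw [hf, integral_const_mul]
    _ = 2 ^ s * (2⁻¹ * ∫ u : ℝ, f u) := by
        rw [Measure.integral_comp_mul_left, abs_of_pos (by norm_num), real_smul, ofReal_inv,
          ofReal_ofNat]
    _ = 2 ^ (s - 1) * betaIntegral ((s + ν) / 2) ((s - ν) / 2) := by
        rw [betaIntegral_eq_integral_sigmoid, cpow_sub _ _ two_ne_zero, cpow_one]
        ring

lemma Real.cosh_rpow_neg_le {σ : ℝ} (hσ : 0 ≤ σ) (t : ℝ) :
    Real.cosh t ^ (-σ) ≤ 2 ^ σ * Real.exp (-(σ * |t|)) := by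
  have hlow : Real.exp |t| / 2 ≤ Real.cosh t := by
    rw [Real.cosh_eq]; linarith [Real.exp_abs_le t]
  calc Real.cosh t ^ (-σ) ≤ (Real.exp |t| / 2) ^ (-σ) :=
        Real.rpow_le_rpow_of_nonpos (by positivity) hlow (neg_nonpos.mpr hσ)
    _ = 2 ^ σ * Real.exp (-(σ * |t|)) := by
        rw [Real.div_rpow (Real.exp_pos _).le zero_le_two, ← Real.exp_mul,
          Real.rpow_neg zero_le_two]
        field_simp

lemma Complex.norm_cosh_le (w : ℂ) : ‖cosh w‖ ≤ Real.exp |w.re| := by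
  rw [cosh, norm_div, Complex.norm_two]
  calc ‖exp w + exp (-w)‖ / 2 ≤ (Real.exp w.re + Real.exp (-w.re)) / 2 := by
        gcongr
        simpa only [norm_exp, neg_re] using norm_add_le (exp w) (exp (-w))
    _ ≤ Real.exp |w.re| := by
        linarith [Real.exp_le_exp.mpr (le_abs_self w.re), Real.exp_le_exp.mpr (neg_le_abs w.re)]

lemma integrable_comp_abs_of_integrableOn_Ioi {E : Type*} [NormedAddCommGroup E] {f : ℝ → E}
    (hf : IntegrableOn f (Ioi 0)) : Integrable fun t => f |t| := by
  have hIoi : IntegrableOn (fun t => f |t|) (Ioi 0) :=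
    hf.congr_fun (fun t ht => by rw [abs_of_pos ht]) measurableSet_Ioi
  have hIic : IntegrableOn (fun t => f |t|) (Iic 0) := by
    have hneg : MeasurableEmbedding fun x : ℝ => -x := (Homeomorph.neg ℝ).measurableEmbedding
    rw [← Measure.map_neg_eq_self (volume : Measure ℝ), hneg.integrableOn_map_iff]
    simp_rw [Function.comp_def, abs_neg, neg_preimage, neg_Iic, neg_zero]
    exact Iff.mpr integrableOn_Ici_iff_integrableOn_Ioi hIoi
  have := hIic.union hIoi
  rwa [Iic_union_Ioi, integrableOn_univ] at this

lemma integrableOn_cosh_rpow_neg_mul_exp_Ioi {σ c : ℝ} (hσ : 0 ≤ σ) (hc : c < σ) :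
    IntegrableOn (fun t => Real.cosh t ^ (-σ) * Real.exp (c * t)) (Ioi 0) := by
  refine Integrable.mono' ((exp_neg_integrableOn_Ioi 0 (sub_pos.mpr hc)).const_mul (2 ^ σ))
    (by fun_prop) ((ae_restrict_mem measurableSet_Ioi).mono fun t ht => ?_)
  rw [Real.norm_of_nonneg (by positivity)]
  calc Real.cosh t ^ (-σ) * Real.exp (c * t)
      ≤ 2 ^ σ * Real.exp (-(σ * |t|)) * Real.exp (c * t) := by
        gcongr; exact Real.cosh_rpow_neg_le hσ t
    _ = 2 ^ σ * Real.exp (-(σ - c) * t) := by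
        rw [abs_of_pos ht, mul_assoc, ← Real.exp_add]; ring_nf

lemma integrable_cosh_cpow_neg_mul_exp {s ν : ℂ} (h : |ν.re| < s.re) :
    Integrable fun t : ℝ => (Real.cosh t : ℂ) ^ (-s) * exp (ν * t) := by
  have hσ : 0 ≤ s.re := (abs_nonneg _).trans h.le
  refine Integrable.mono' (integrable_comp_abs_of_integrableOn_Ioi
      (integrableOn_cosh_rpow_neg_mul_exp_Ioi hσ h)) (by fun_prop) (.of_forall fun t => ?_)
  rw [norm_mul, norm_cpow_eq_rpow_re_of_pos (Real.cosh_pos t), norm_exp, neg_re, Real.cosh_abs]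
  gcongr
  simpa [abs_mul] using le_abs_self (ν.re * t)

lemma integral_eq_integral_Ioi_add_comp_neg {E : Type*} [NormedAddCommGroup E] [NormedSpace ℝ E]
    {g : ℝ → E} (hg : Integrable g) : ∫ t, g t = ∫ t in Ioi 0, (g t + g (-t)) := by
  rw [integral_add hg.integrableOn hg.comp_neg.integrableOn, integral_comp_neg_Ioi, neg_zero,
    add_comm, intervalIntegral.integral_Iic_add_Ioi hg.integrableOn hg.integrableOn]

lemma integrableOn_cpow_mul_exp_neg_mul_Ioi {a : ℂ} {r : ℝ} (ha : 0 < a.re) (hr : 0 < r) :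
    IntegrableOn (fun y : ℝ => (y : ℂ) ^ (a - 1) * exp (-(r * y))) (Ioi 0) := by
  have hreal := integrableOn_rpow_mul_exp_neg_mul_rpow (p := 1) (by linarith : -1 < a.re - 1)
    one_pos hr
  refine hreal.mono' ?_ ((ae_restrict_mem measurableSet_Ioi).mono fun y hy => ?_)
  · refine ContinuousOn.aestronglyMeasurable (fun y hy => ?_) measurableSet_Ioi
    exact ((continuousAt_ofReal_cpow_const _ _ (Or.inr (ne_of_gt hy))).mul
      (by fun_prop)).continuousWithinAt
  · rw [norm_mul, norm_cpow_eq_rpow_re_of_pos hy, norm_exp, Real.rpow_one]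
    simp

lemma integrable_besselK_mellin_integrand {s ν : ℂ} (h : |ν.re| < s.re) :
    Integrable (fun p : ℝ × ℝ =>
        cosh (ν * p.2) * ((p.1 : ℂ) ^ (s - 1) * exp (-((Real.cosh p.2 : ℂ) * p.1))))
      ((volume.restrict (Ioi (0 : ℝ))).prod (volume.restrict (Ioi (0 : ℝ)))) := by
  have hσ : 0 < s.re := (abs_nonneg _).trans_lt h
  have hnorm : ∀ t : ℝ, ∫ y in Ioi (0 : ℝ),
      ‖cosh (ν * t) * ((y : ℂ) ^ (s - 1) * exp (-((Real.cosh t : ℂ) * y)))‖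
      = Real.Gamma s.re * (Real.cosh t ^ (-s.re) * ‖cosh (ν * t)‖) := by
    intro t
    have hc := Real.cosh_pos t
    calc ∫ y in Ioi (0 : ℝ),
          ‖cosh (ν * t) * ((y : ℂ) ^ (s - 1) * exp (-((Real.cosh t : ℂ) * y)))‖
        = ∫ y in Ioi (0 : ℝ),
            ‖cosh (ν * t)‖ * (y ^ (s.re - 1) * Real.exp (-(Real.cosh t * y))) := by
          refine setIntegral_congr_fun measurableSet_Ioi fun y hy => ?_
          rw [norm_mul, norm_mul, norm_cpow_eq_rpow_re_of_pos hy, norm_exp]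
          simp
      _ = Real.Gamma s.re * (Real.cosh t ^ (-s.re) * ‖cosh (ν * t)‖) := by
          rw [integral_const_mul, Real.integral_rpow_mul_exp_neg_mul_Ioi hσ hc, one_div,
            Real.inv_rpow hc.le, ← Real.rpow_neg hc.le]
          ring
  have hmeas : AEStronglyMeasurable (fun p : ℝ × ℝ =>
      cosh (ν * p.2) * ((p.1 : ℂ) ^ (s - 1) * exp (-((Real.cosh p.2 : ℂ) * p.1))))
      ((volume.restrict (Ioi (0 : ℝ))).prod (volume.restrict (Ioi (0 : ℝ)))) := by
    rw [Measure.prod_restrict]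
    refine ContinuousOn.aestronglyMeasurable (fun p hp => ?_)
      (measurableSet_Ioi.prod measurableSet_Ioi)
    have hcpow := (continuousAt_ofReal_cpow_const _ (s - 1) (Or.inr hp.1.ne')).comp
      (continuousAt_fst (p := p))
    exact (ContinuousAt.mul (by fun_prop) (hcpow.mul (by fun_prop))).continuousWithinAt
  rw [integrable_prod_iff' hmeas]
  refine ⟨.of_forall fun t => ?_, ?_⟩
  · exact (integrableOn_cpow_mul_exp_neg_mul_Ioi hσ (Real.cosh_pos t)).const_mul (cosh (ν * t))
  · simp_rw [hnorm]
    refine Integrable.const_mul (Integrable.mono'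
      (integrableOn_cosh_rpow_neg_mul_exp_Ioi hσ.le h) (by fun_prop)
      ((ae_restrict_mem measurableSet_Ioi).mono fun t ht => ?_)) _
    rw [Real.norm_of_nonneg (by positivity)]
    gcongr
    refine (norm_cosh_le _).trans (Real.exp_le_exp.mpr ?_)
    simp [abs_mul, abs_of_pos (show (0 : ℝ) < t from ht)]

lemma integral_Ioi_cosh_cpow_neg_mul_cosh {s ν : ℂ} (h : |ν.re| < s.re) :
    ∫ t in Ioi (0 : ℝ), (Real.cosh t : ℂ) ^ (-s) * cosh (ν * t)
      = (∫ t : ℝ, (Real.cosh t : ℂ) ^ (-s) * exp (ν * t)) / 2 := by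
  rw [integral_eq_integral_Ioi_add_comp_neg (integrable_cosh_cpow_neg_mul_exp h),
    eq_div_iff two_ne_zero, ← integral_mul_const]
  refine setIntegral_congr_fun measurableSet_Ioi fun t _ => ?_
  rw [Real.cosh_neg, ofReal_neg, cosh, mul_neg, exp_neg]
  ring

lemma integral_besselK_mul_cpow {s ν : ℂ} (h : |ν.re| < s.re) :
    ∫ y in Ioi (0 : ℝ), besselK ν y * (y : ℂ) ^ (s - 1)
      = Gamma s * ∫ t in Ioi (0 : ℝ), (Real.cosh t : ℂ) ^ (-s) * cosh (ν * t) := by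
  have hσ : 0 < s.re := (abs_nonneg _).trans_lt h
  calc ∫ y in Ioi (0 : ℝ), besselK ν y * (y : ℂ) ^ (s - 1)
      = ∫ y in Ioi (0 : ℝ), ∫ t in Ioi (0 : ℝ),
          cosh (ν * t) * ((y : ℂ) ^ (s - 1) * exp (-((Real.cosh t : ℂ) * y))) := by
        refine setIntegral_congr_fun measurableSet_Ioi fun y _ => ?_
        rw [besselK, ← integral_mul_const]
        congr 1 with t
        ring_nf
    _ = ∫ t in Ioi (0 : ℝ), ∫ y in Ioi (0 : ℝ),
          cosh (ν * t) * ((y : ℂ) ^ (s - 1) * exp (-((Real.cosh t : ℂ) * y))) :=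
        integral_integral_swap (integrable_besselK_mellin_integrand h)
    _ = ∫ t in Ioi (0 : ℝ), Gamma s * ((Real.cosh t : ℂ) ^ (-s) * cosh (ν * t)) := by
        refine setIntegral_congr_fun measurableSet_Ioi fun t _ => ?_
        have hc := Real.cosh_pos t
        have harg : (Real.cosh t : ℂ).arg ≠ Real.pi := by
          rw [arg_ofReal_of_nonneg hc.le]; exact Real.pi_ne_zero.symm
        rw [integral_const_mul, integral_cpow_mul_exp_neg_mul_Ioi hσ hc, one_div,
          inv_cpow _ _ harg, ← cpow_neg]
        ring
    _ = Gamma s * ∫ t in Ioi (0 : ℝ), (Real.cosh t : ℂ) ^ (-s) * cosh (ν * t) :=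
        integral_const_mul _ _

/-- The Mellin transform of `K_{iR}` equals `2^{s-2} Γ((s+iR)/2) Γ((s-iR)/2)`
for `Re(s) > |Im(R)|`. -/
theorem mellin_besselK (R s : ℂ) (hs : |R.im| < s.re) :
    ∫ y in Set.Ioi (0 : ℝ), besselK (Complex.I * R) y * (y : ℂ) ^ (s - 1)
      = 2 ^ (s - 2) * Complex.Gamma ((s + Complex.I * R) / 2)
        * Complex.Gamma ((s - Complex.I * R) / 2) := by
  set ν := I * R
  have h : |ν.re| < s.re := by simpa [ν] using hs
  have hplus : 0 < ((s + ν) / 2).re := by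
    simp only [div_ofNat_re, add_re]; linarith [neg_abs_le ν.re]
  have hminus : 0 < ((s - ν) / 2).re := by
    simp only [div_ofNat_re, sub_re]; linarith [le_abs_self ν.re]
  have h2 : (2 : ℂ) ^ (s - 1) = 2 ^ (s - 2) * 2 := by
    rw [show s - 1 = (s - 2) + 1 by ring, cpow_add _ _ two_ne_zero, cpow_one]
  rw [integral_besselK_mul_cpow h, integral_Ioi_cosh_cpow_neg_mul_cosh h,
    integral_cosh_cpow_neg_mul_exp, mul_assoc, Gamma_mul_Gamma_eq_betaIntegral hplus hminus,
    show (s + ν) / 2 + (s - ν) / 2 = s by ring, h2]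
  ring
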